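/- arXiv:0706.2404 — 4 statements merged into one kernel-verified Lean document; each statement's English description precedes it below -/
import Mathlib

section
/- Let P₀, ..., P_ℓ be commuting endomorphisms of V with a decomposition id_V = Σ_i Q_i P^i as above, and let P = P₀⋯P_ℓ. Then for any f ∈ V, the range condition holds: f is in the range of P if and only if f is in the range of P_i for every i = 0, ..., ℓ. In particular range(P) = ∩_{i=0}^ℓ range(P_i). -/
/-!
`P = P_i P^i` factors through every `P_i`. Conversely, if `f = P_i g_i` for all `i`, then
`f = Σ_i Q_i P^i f = Σ_i Q_i P^i P_i g_i = P (Σ_i Q_i g_i)`, because each `Q_i` commutes with `P`.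
-/

open Finset

/-- The product `∏_{j ∈ s} P j` of a family of pairwise commuting endomorphisms. -/
def prodOver {R : Type*} [Monoid R] {n : ℕ} (P : Fin n → R)
    (hP : ∀ i j, Commute (P i) (P j)) (s : Finset (Fin n)) : R :=
  s.noncommProd P fun a _ b _ _ => hP a b

section Monoid

variable {R : Type*} [Monoid R] {n : ℕ} (P : Fin n → R) (hP : ∀ i j, Commute (P i) (P j))

theorem commute_prodOver {a : R} {s : Finset (Fin n)} (ha : ∀ j ∈ s, Commute a (P j)) :
    Commute a (prodOver P hP s) :=
  Finset.noncommProd_commute _ _ _ _ ha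

theorem prodOver_univ_eq_mul_erase (i : Fin n) :
    prodOver P hP univ = P i * prodOver P hP (univ.erase i) :=
  (Finset.mul_noncommProd_erase _ (mem_univ i) P _).symm

theorem prodOver_univ_eq_erase_mul (i : Fin n) :
    prodOver P hP univ = prodOver P hP (univ.erase i) * P i := by
  rw [prodOver_univ_eq_mul_erase P hP i, (commute_prodOver P hP fun j _ => hP i j).eq]

end Monoid

section Module

variable {R M : Type*} [Semiring R] [AddCommMonoid M] [Module R M] {n : ℕ}
  (P : Fin n → Module.End R M) (hP : ∀ i j, Commute (P i) (P j))

theorem range_prodOver_le_range (i : Fin n) :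
    LinearMap.range (prodOver P hP univ) ≤ LinearMap.range (P i) := by
  rw [prodOver_univ_eq_mul_erase P hP i, Module.End.mul_eq_comp]
  exact LinearMap.range_comp_le_range _ _

theorem iInf_range_le_range_prodOver (Q : Fin n → Module.End R M)
    (hQP : ∀ i j, Commute (Q i) (P j))
    (hid : ∑ i, Q i * prodOver P hP (univ.erase i) = 1) :
    ⨅ i, LinearMap.range (P i) ≤ LinearMap.range (prodOver P hP univ) := by
  intro f hf
  choose g hg using Submodule.mem_iInf _ |>.mp hf
  refine ⟨∑ i, Q i (g i), ?_⟩
  have hterm : ∀ i, prodOver P hP univ (Q i (g i)) = (Q i * prodOver P hP (univ.erase i)) f :=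
    fun i => calc
      prodOver P hP univ (Q i (g i)) = Q i (prodOver P hP univ (g i)) :=
        LinearMap.congr_fun (commute_prodOver P hP fun j _ => hQP i j).eq.symm (g i)
      _ = (Q i * prodOver P hP (univ.erase i)) f := by
        rw [prodOver_univ_eq_erase_mul P hP i, Module.End.mul_apply, hg i]; rfl
  rw [map_sum, Finset.sum_congr rfl fun i _ => hterm i, ← LinearMap.sum_apply, hid,
    Module.End.one_apply]

theorem range_prodOver_eq_iInf (Q : Fin n → Module.End R M)
    (hQP : ∀ i j, Commute (Q i) (P j))
    (hid : ∑ i, Q i * prodOver P hP (univ.erase i) = 1) :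
    LinearMap.range (prodOver P hP univ) = ⨅ i, LinearMap.range (P i) :=
  le_antisymm (le_iInf (range_prodOver_le_range P hP))
    (iInf_range_le_range_prodOver P hP Q hQP hid)

end Module

/-- If commuting `P₀,…,P_ℓ ∈ End(V)` admit a decomposition
`id_V = Σ_i Q_i P^i` and `P = P₀⋯P_ℓ`, then for any `f ∈ V`: `f ∈ range(P)` iff
`f ∈ range(P_i)` for every `i`; in particular `range(P) = ∩_i range(P_i)`. -/
theorem statement5 {F V : Type*} [Field F] [AddCommGroup V] [Module F V]
    (ℓ : ℕ) (P Q : Fin (ℓ + 1) → Module.End F V)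
    (hP : ∀ i j, Commute (P i) (P j))
    (hQP : ∀ i j, Commute (Q i) (P j))
    (hid : ∑ i : Fin (ℓ + 1), Q i * prodOver P hP (Finset.univ.erase i) = 1) :
    (∀ f : V, f ∈ LinearMap.range (prodOver P hP Finset.univ) ↔
      ∀ i : Fin (ℓ + 1), f ∈ LinearMap.range (P i)) ∧
    LinearMap.range (prodOver P hP Finset.univ) =
      ⨅ i : Fin (ℓ + 1), LinearMap.range (P i) := by
  have hrange := range_prodOver_eq_iInf P hP Q hQP hid
  exact ⟨fun f => by rw [hrange, Submodule.mem_iInf], hrange⟩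
end

section
/- Under the α-decomposition hypotheses, suppose additionally that the sets in α are pairwise disjoint: I ∩ J = ∅ for all I ≠ J in α. Then for fixed f ∈ V, the map F(u) = (P^J u)_{J∈α} from {u : Pu = f} to {(u_J) : P_J u_J = f for all J ∈ α} is a bijection with inverse B((u_J)) = Σ_J Q_J u_J; in particular F ∘ B is the identity on the solution set of the system P_J u_J = f. -/
/-! Given `P = P^J * P_J` and `P^J = P^{I ∪ J} * P_I` for disjoint `I, J`, any solution `(u_J)` of
the system satisfies `P^J u_I = P^{I ∪ J} f = P^I u_J`; plugging this into the decomposition of the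
identity applied to `u_J` gives `P^J (Σ_I Q_I u_I) = Σ_I Q_I P^I u_J = u_J`. -/

open Finset

namespace prodOver

section Monoid

variable {R : Type*} [Monoid R] {n : ℕ} (P : Fin n → R) (hP : ∀ i j, Commute (P i) (P j))

theorem union {s t : Finset (Fin n)} (h : Disjoint s t) :
    prodOver P hP (s ∪ t) = prodOver P hP s * prodOver P hP t := by
  classical
  exact noncommProd_union_of_disjoint h P _

theorem commute_of_forall {q : R} (hq : ∀ i, Commute q (P i)) (s : Finset (Fin n)) :
    Commute q (prodOver P hP s) :=
  noncommProd_commute s P _ q fun i _ => hq i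

theorem commute (s t : Finset (Fin n)) : Commute (prodOver P hP s) (prodOver P hP t) :=
  commute_of_forall P hP (fun i => (commute_of_forall P hP (fun j => hP i j) s).symm) t

theorem compl_mul (s : Finset (Fin n)) :
    prodOver P hP (univ \ s) * prodOver P hP s = prodOver P hP univ := by
  classical
  rw [← union P hP sdiff_disjoint, sdiff_union_of_subset (subset_univ s)]

theorem mul_compl (s : Finset (Fin n)) :
    prodOver P hP s * prodOver P hP (univ \ s) = prodOver P hP univ := by
  rw [(commute P hP s _).eq, compl_mul]

theorem compl_eq_of_disjoint {I J : Finset (Fin n)} (h : Disjoint I J) :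
    prodOver P hP (univ \ J) = prodOver P hP (univ \ (I ∪ J)) * prodOver P hP I := by
  classical
  rw [← union P hP (disjoint_sdiff_self_left.mono_right subset_union_left)]
  congr 1
  ext x
  by_cases hx : x ∈ I <;> simp [hx, disjoint_left.mp h]

end Monoid

variable {R V : Type*} [Semiring R] [AddCommMonoid V] [Module R V] {n : ℕ}
  (P : Fin n → Module.End R V) (hP : ∀ i j, Commute (P i) (P j))

theorem compl_apply_eq_of_disjoint {I J : Finset (Fin n)} (h : Disjoint I J) {x y : V}
    (hxy : prodOver P hP I x = prodOver P hP J y) :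
    prodOver P hP (univ \ J) x = prodOver P hP (univ \ I) y := by
  rw [compl_eq_of_disjoint P hP h, compl_eq_of_disjoint P hP h.symm, union_comm,
    Module.End.mul_apply, Module.End.mul_apply, hxy]

theorem univ_apply_of_commute {q : Module.End R V} (hq : ∀ i, Commute q (P i))
    (J : Finset (Fin n)) (x : V) :
    prodOver P hP univ (q x) = q (prodOver P hP (univ \ J) (prodOver P hP J x)) := by
  rw [← Module.End.mul_apply, ← (commute_of_forall P hP hq univ).eq, ← compl_mul P hP J]
  rfl

end prodOver

theorem statement8_general {F V : Type*} [Field F] [AddCommGroup V] [Module F V]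
    (ℓ : ℕ) (P : Fin (ℓ + 1) → Module.End F V)
    (hP : ∀ i j, Commute (P i) (P j))
    (α : Finset (Finset (Fin (ℓ + 1))))
    (hdisj : ∀ I ∈ α, ∀ J ∈ α, I ≠ J → Disjoint I J)
    (Q : Finset (Fin (ℓ + 1)) → Module.End F V)
    (hQP : ∀ J ∈ α, ∀ i, Commute (Q J) (P i))
    (hid : ∑ J ∈ α, Q J * prodOver P hP (Finset.univ \ J) = 1)
    (f : V) :
    -- F maps solutions of `Pu = f` to solutions of the system and `B ∘ F = id`:
    (∀ u : V, prodOver P hP Finset.univ u = f →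
      (∀ J ∈ α, prodOver P hP J (prodOver P hP (Finset.univ \ J) u) = f) ∧
      ∑ J ∈ α, Q J (prodOver P hP (Finset.univ \ J) u) = u) ∧
    -- B maps solutions of the system to solutions of `Pu = f` and `F ∘ B = id`:
    (∀ u : Finset (Fin (ℓ + 1)) → V, (∀ J ∈ α, prodOver P hP J (u J) = f) →
      prodOver P hP Finset.univ (∑ J ∈ α, Q J (u J)) = f ∧
      ∀ J ∈ α, prodOver P hP (Finset.univ \ J) (∑ I ∈ α, Q I (u I)) = u J) := by
  have hid_apply (v : V) : ∑ J ∈ α, Q J (prodOver P hP (univ \ J) v) = v := by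
    simpa using congr($hid v)
  refine ⟨fun u hu => ⟨fun J _ => ?_, hid_apply u⟩, fun u hu => ⟨?_, fun J hJ => ?_⟩⟩
  · rw [← Module.End.mul_apply, prodOver.mul_compl, hu]
  · calc prodOver P hP univ (∑ J ∈ α, Q J (u J))
        = ∑ J ∈ α, Q J (prodOver P hP (univ \ J) f) := by
          rw [map_sum]
          refine sum_congr rfl fun J hJ => ?_
          rw [prodOver.univ_apply_of_commute P hP (hQP J hJ) J, hu J hJ]
      _ = f := hid_apply f
  · have hsymm : ∀ I ∈ α, prodOver P hP (univ \ J) (u I) = prodOver P hP (univ \ I) (u J) := by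
      intro I hI
      obtain rfl | hIJ := eq_or_ne I J
      · rfl
      · exact prodOver.compl_apply_eq_of_disjoint P hP (hdisj I hI J hJ hIJ)
          (by rw [hu I hI, hu J hJ])
    calc prodOver P hP (univ \ J) (∑ I ∈ α, Q I (u I))
        = ∑ I ∈ α, Q I (prodOver P hP (univ \ J) (u I)) := by
          rw [map_sum]
          refine sum_congr rfl fun I hI => ?_
          exact LinearMap.congr_fun (prodOver.commute_of_forall P hP (hQP I hI) _).symm.eq (u I)
      _ = ∑ I ∈ α, Q I (prodOver P hP (univ \ I) (u J)) :=
          sum_congr rfl fun I hI => by rw [hsymm I hI]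
      _ = u J := hid_apply (u J)

/-- Given an `α`-decomposition `id_V = Σ_{J∈α} Q_J P^J` of
`P = P₀⋯P_ℓ` where the sets in `α` are pairwise disjoint, and a fixed `f ∈ V`,
the map `F(u) = (P^J u)_{J∈α}` from `{u : Pu = f}` to
`{(u_J) : P_J u_J = f ∀ J ∈ α}` is a bijection with inverse
`B((u_J)) = Σ_J Q_J u_J`; in particular `F ∘ B` is the identity on the solution
set of the system `P_J u_J = f`. -/
theorem statement8 {F V : Type*} [Field F] [AddCommGroup V] [Module F V]
    (ℓ : ℕ) (P : Fin (ℓ + 1) → Module.End F V)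
    (hP : ∀ i j, Commute (P i) (P j))
    (α : Finset (Finset (Fin (ℓ + 1)))) (hne : α.Nonempty)
    (hL : Finset.univ ∉ α)
    (hdisj : ∀ I ∈ α, ∀ J ∈ α, I ≠ J → Disjoint I J)
    (Q : Finset (Fin (ℓ + 1)) → Module.End F V)
    (hQP : ∀ J ∈ α, ∀ i, Commute (Q J) (P i))
    (hid : ∑ J ∈ α, Q J * prodOver P hP (Finset.univ \ J) = 1)
    (f : V) :
    -- F maps solutions of `Pu = f` to solutions of the system and `B ∘ F = id`:
    (∀ u : V, prodOver P hP Finset.univ u = f →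
      (∀ J ∈ α, prodOver P hP J (prodOver P hP (Finset.univ \ J) u) = f) ∧
      ∑ J ∈ α, Q J (prodOver P hP (Finset.univ \ J) u) = u) ∧
    -- B maps solutions of the system to solutions of `Pu = f` and `F ∘ B = id`:
    (∀ u : Finset (Fin (ℓ + 1)) → V, (∀ J ∈ α, prodOver P hP J (u J) = f) →
      prodOver P hP Finset.univ (∑ J ∈ α, Q J (u J)) = f ∧
      ∀ J ∈ α, prodOver P hP (Finset.univ \ J) (∑ I ∈ α, Q I (u I)) = u J) :=
  statement8_general ℓ P hP α hdisj Q hQP hid f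
end

section
/- A composition P = P₀⋯P_ℓ of commuting endomorphisms of V admits an α-decomposition if and only if it admits a dual α^u-decomposition, where α^u = {J ⊆ L : ∀ I ∈ α, J∖I ≠ ∅}. -/
/-!
Inside the centralizer `A` of the `P_i` in `End V` the `P_i` are central, and both kinds of
decomposition say that `1` lies in a left ideal of `A`: an `α`-decomposition that `1` lies in the
ideal generated by the monomials `P^I = ∏_{t ∉ I} P_t`, `I ∈ α`, and a dual decomposition at `J`
that `1` lies in the ideal generated by the `P_j`, `j ∈ J`. The sets of `α^u` are exactly the
transversals of the complements `L \ I`. Since every `P^I` is a multiple of `P_j` for `j ∈ J \ I`,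
one direction is immediate. For the other, `1 ∈ K + A a` and `1 ∈ K + A b` give `1 ∈ K + A ab`
when `a` is central, so by induction over `α` each monomial `P^I` may be traded for the single
generators `P_t`, `t ∉ I`, without leaving the unit ideal.
-/

open Finset

/-- `P = P₀⋯P_ℓ` is an `α`-decomposition. -/
def IsAlphaDecomp {F V : Type*} [Field F] [AddCommGroup V] [Module F V]
    {ℓ : ℕ} (P : Fin (ℓ + 1) → Module.End F V)
    (hP : ∀ i j, Commute (P i) (P j))
    (α : Finset (Finset (Fin (ℓ + 1)))) : Prop :=
  ∃ Q : Finset (Fin (ℓ + 1)) → Module.End F V,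
    (∀ J ∈ α, ∀ i, Commute (Q J) (P i)) ∧
    ∑ J ∈ α, Q J * prodOver P hP (Finset.univ \ J) = 1

/-- `P = P₀⋯P_ℓ` is a dual `β`-decomposition: for every `J ∈ β` there are
`Q_{J,j}` (`j ∈ J`) commuting with all `P_i` with `id_V = Σ_{j∈J} Q_{J,j} P_j`. -/
def IsDualDecomp {F V : Type*} [Field F] [AddCommGroup V] [Module F V]
    {ℓ : ℕ} (P : Fin (ℓ + 1) → Module.End F V)
    (β : Finset (Finset (Fin (ℓ + 1)))) : Prop :=
  ∀ J ∈ β, ∃ Q : Fin (ℓ + 1) → Module.End F V,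
    (∀ j ∈ J, ∀ i, Commute (Q j) (P i)) ∧
    ∑ j ∈ J, Q j * P j = 1

section ProdOver

variable {M : Type*} [Monoid M] {n : ℕ} (p : Fin n → M) (hp : ∀ i j, Commute (p i) (p j))

theorem prodOver_empty : prodOver p hp ∅ = 1 :=
  noncommProd_empty _ _

theorem prodOver_insert {j : Fin n} {T : Finset (Fin n)} (hj : j ∉ T) :
    prodOver p hp (insert j T) = p j * prodOver p hp T :=
  noncommProd_insert_of_notMem _ _ _ _ hj

theorem prodOver_erase_mul {j : Fin n} {T : Finset (Fin n)} (hj : j ∈ T) :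
    prodOver p hp (T.erase j) * p j = prodOver p hp T :=
  noncommProd_erase_mul _ hj _ _

end ProdOver

section CentralFamily

variable {A : Type*} [Ring A] {n : ℕ}

theorem Ideal.one_mem_sup_span_singleton_mul {K : Ideal A} {a b : A} (ha : ∀ c, Commute a c)
    (h₁ : 1 ∈ K ⊔ Ideal.span {a}) (h₂ : 1 ∈ K ⊔ Ideal.span {b}) :
    1 ∈ K ⊔ Ideal.span {a * b} := by
  obtain ⟨x, hx, _, hr, hxr⟩ := Submodule.mem_sup.1 h₁
  obtain ⟨r, rfl⟩ := Ideal.mem_span_singleton'.1 hr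
  obtain ⟨y, hy, _, hs, hys⟩ := Submodule.mem_sup.1 h₂
  obtain ⟨s, rfl⟩ := Ideal.mem_span_singleton'.1 hs
  refine Submodule.mem_sup.2 ⟨x + r * a * y, K.add_mem hx (K.mul_mem_left _ hy),
    r * s * (a * b), Ideal.mem_span_singleton'.2 ⟨r * s, rfl⟩, ?_⟩
  calc x + r * a * y + r * s * (a * b) = x + r * a * (y + s * b) := by
        rw [mul_assoc r s, ← mul_assoc s, ← (ha s).eq]; noncomm_ring
    _ = 1 := by rw [hys, mul_one, hxr]

theorem prodOver_mem_span_singleton (p : Fin n → A) (hp : ∀ i j, Commute (p i) (p j))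
    {T : Finset (Fin n)} {j : Fin n} (hj : j ∈ T) :
    prodOver p hp T ∈ Ideal.span {p j} := by
  classical
  rw [← prodOver_erase_mul p hp hj]
  exact Ideal.mul_mem_left _ _ (Ideal.mem_span_singleton_self _)

variable (p : Fin n → A) (hp : ∀ i a, Commute (p i) a)

theorem one_mem_sup_span_prodOver (K : Ideal A) (T : Finset (Fin n))
    (h : ∀ t ∈ T, 1 ∈ K ⊔ Ideal.span {p t}) :
    1 ∈ K ⊔ Ideal.span {prodOver p (fun i j => hp i (p j)) T} := by
  classical
  induction T using Finset.induction_on with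
  | empty => exact Ideal.mem_sup_right (by simp [prodOver_empty])
  | insert j T hj ih =>
    rw [prodOver_insert _ _ hj]
    exact Ideal.one_mem_sup_span_singleton_mul (hp j) (h j (mem_insert_self j T))
      (ih fun t ht => h t (mem_insert_of_mem ht))

theorem one_mem_sup_span_prodOver_image (𝒢 : Finset (Finset (Fin n))) (K : Ideal A)
    (h : ∀ J : Finset (Fin n), (∀ T ∈ 𝒢, (J ∩ T).Nonempty) → 1 ∈ K ⊔ Ideal.span (p '' J)) :
    1 ∈ K ⊔ Ideal.span (prodOver p (fun i j => hp i (p j)) '' 𝒢) := by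
  classical
  induction 𝒢 using Finset.induction_on generalizing K with
  | empty => simpa using h ∅ (by simp)
  | insert T 𝒢 _ ih =>
    rw [coe_insert, Set.image_insert_eq, Ideal.span_insert, sup_comm (Ideal.span {_}),
      ← sup_assoc]
    refine one_mem_sup_span_prodOver p hp _ T fun t ht => ?_
    rw [sup_right_comm]
    refine ih _ fun J hJ => ?_
    rw [sup_assoc, ← Ideal.span_insert, ← Set.image_insert_eq, ← coe_insert]
    refine h _ fun T' hT' => ?_
    rcases mem_insert.1 hT' with rfl | hT'
    · exact ⟨t, mem_inter.2 ⟨mem_insert_self t J, ht⟩⟩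
    · exact (hJ T' hT').mono (inter_subset_inter_right (subset_insert t J))

theorem one_mem_span_prodOver_image_iff (𝒢 : Finset (Finset (Fin n))) :
    1 ∈ Ideal.span (prodOver p (fun i j => hp i (p j)) '' 𝒢) ↔
      ∀ J : Finset (Fin n), (∀ T ∈ 𝒢, (J ∩ T).Nonempty) → 1 ∈ Ideal.span (p '' J) := by
  refine ⟨fun h J hJ => Ideal.span_le.2 ?_ h, fun h => ?_⟩
  · rintro _ ⟨T, hT, rfl⟩
    obtain ⟨j, hj⟩ := hJ T hT
    exact Ideal.span_mono (Set.singleton_subset_iff.2 (Set.mem_image_of_mem p (mem_inter.1 hj).1))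
      (prodOver_mem_span_singleton p _ (mem_inter.1 hj).2)
  · simpa using one_mem_sup_span_prodOver_image p hp 𝒢 ⊥ (by simpa using h)

end CentralFamily

section Commutant

variable {R : Type*} [Ring R] {n : ℕ}

theorem one_mem_span_image_iff_exists_sum_mul_eq_one {ι : Type*} (A : Subring R)
    (s : Finset ι) (v : ι → A) :
    (1 : A) ∈ Ideal.span (v '' s) ↔ ∃ Q : ι → R, (∀ i ∈ s, Q i ∈ A) ∧ ∑ i ∈ s, Q i * v i = 1 := by
  classical
  rw [Submodule.mem_span_image_finset_iff_exists_fun']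
  constructor
  · rintro ⟨c, hc⟩
    exact ⟨fun i => c i, fun i _ => (c i).2, by simpa using congrArg Subtype.val hc⟩
  · rintro ⟨Q, hQA, hQ⟩
    refine ⟨fun i => if h : i ∈ s then ⟨Q i, hQA i h⟩ else 0, Subtype.ext ?_⟩
    rw [OneMemClass.coe_one, ← hQ]
    push_cast
    exact sum_congr rfl fun i hi => by simp [hi]

theorem mem_centralizer_range_iff (P : Fin n → R) {x : R} :
    x ∈ Subring.centralizer (Set.range P) ↔ ∀ i, Commute x (P i) := by
  simp [Subring.mem_centralizer_iff, commute_iff_eq, eq_comm]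

variable (P : Fin n → R) (hP : ∀ i j, Commute (P i) (P j))

def toCentralizer (i : Fin n) : Subring.centralizer (Set.range P) :=
  ⟨P i, (mem_centralizer_range_iff P).2 (hP i)⟩

theorem toCentralizer_commute (i : Fin n) (a : Subring.centralizer (Set.range P)) :
    Commute (toCentralizer P hP i) a :=
  Subtype.ext ((mem_centralizer_range_iff P).1 a.2 i).eq.symm

theorem coe_prodOver_toCentralizer (s : Finset (Fin n)) :
    (↑(prodOver (toCentralizer P hP)
      (fun i j => toCentralizer_commute P hP i (toCentralizer P hP j)) s) : R) =
      prodOver P hP s :=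
  map_noncommProd s _ _ (Subring.centralizer (Set.range P)).subtype

end Commutant

section Decompositions

variable {F V : Type*} [Field F] [AddCommGroup V] [Module F V] {ℓ : ℕ}
  (P : Fin (ℓ + 1) → Module.End F V) (hP : ∀ i j, Commute (P i) (P j))

theorem isAlphaDecomp_iff_one_mem_span (α : Finset (Finset (Fin (ℓ + 1)))) :
    IsAlphaDecomp P hP α ↔
      1 ∈ Ideal.span ((fun I => prodOver (toCentralizer P hP)
        (fun i j => toCentralizer_commute P hP i (toCentralizer P hP j)) (univ \ I)) '' α) := by
  simp only [one_mem_span_image_iff_exists_sum_mul_eq_one, coe_prodOver_toCentralizer,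
    mem_centralizer_range_iff]
  rfl

theorem isDualDecomp_iff_one_mem_span (β : Finset (Finset (Fin (ℓ + 1)))) :
    IsDualDecomp P β ↔ ∀ J ∈ β, 1 ∈ Ideal.span (toCentralizer P hP '' J) := by
  simp only [one_mem_span_image_iff_exists_sum_mul_eq_one, mem_centralizer_range_iff]
  rfl

end Decompositions

/-- `P = P₀⋯P_ℓ` admits an `α`-decomposition iff it admits a dual
`α^u`-decomposition, where `α^u = {J ⊆ L : ∀ I ∈ α, J ∖ I ≠ ∅}`. -/
theorem statement12 {F V : Type*} [Field F] [AddCommGroup V] [Module F V]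
    (ℓ : ℕ) (P : Fin (ℓ + 1) → Module.End F V)
    (hP : ∀ i j, Commute (P i) (P j))
    (α : Finset (Finset (Fin (ℓ + 1)))) :
    IsAlphaDecomp P hP α ↔
      IsDualDecomp P
        (Finset.univ.filter (fun J => ∀ I ∈ α, (J \ I).Nonempty)) := by
  classical
  rw [isAlphaDecomp_iff_one_mem_span, isDualDecomp_iff_one_mem_span P hP,
    ← Set.image_image (g := prodOver _ _) (f := (univ \ ·)), ← coe_image,
    one_mem_span_prodOver_image_iff _ (toCentralizer_commute P hP)]
  simp [← inter_sdiff_assoc]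
end

section
/- Let P = P₀⋯P_ℓ be a composition of commuting endomorphisms of V with decomposition id_V = Σ_i Q_i P^i ([Q_i,P_j]=0, P^i = ∏_{j≠i}P_j). If S ∈ End(V) is a formal symmetry of P (i.e. P S = S' P for some S' ∈ End(V)) and Pr_i := Q_i P^i, then for each pair i, j the operator S_{ij} := Pr_i S Pr_j satisfies P_i S_{ij} = T_{ij} P_j for some T_{ij} ∈ End(V); in particular S_{ij} maps ker(P_j) into ker(P_i). -/
open Finset

section Monoid

variable {R : Type*} [Monoid R]

theorem Commute.prodOver {n : ℕ} {P : Fin n → R} (hP : ∀ i j, Commute (P i) (P j))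
    {a : R} (ha : ∀ k, Commute a (P k)) (s : Finset (Fin n)) :
    Commute a (prodOver P hP s) :=
  s.noncommProd_commute _ _ _ fun k _ => ha k

theorem mul_prodOver_erase {n : ℕ} (P : Fin n → R) (hP : ∀ i j, Commute (P i) (P j))
    (i : Fin n) : P i * prodOver P hP (univ.erase i) = prodOver P hP univ :=
  univ.mul_noncommProd_erase (mem_univ i) P _

theorem mul_sandwich_eq_mul_of_mul_eq_mul {p pᵢ cᵢ qᵢ pⱼ cⱼ qⱼ s s' : R}
    (hᵢ : pᵢ * cᵢ = p) (hⱼ : pⱼ * cⱼ = p) (hqᵢ : Commute qᵢ pᵢ) (hqⱼ : Commute qⱼ p)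
    (hpⱼ : Commute pⱼ cⱼ) (hsym : p * s = s' * p) :
    pᵢ * (qᵢ * cᵢ * s * (qⱼ * cⱼ)) = qᵢ * s' * qⱼ * cⱼ * cⱼ * pⱼ :=
  calc pᵢ * (qᵢ * cᵢ * s * (qⱼ * cⱼ))
      = qᵢ * ((pᵢ * cᵢ) * s) * (qⱼ * cⱼ) := by simp only [← mul_assoc, hqᵢ.eq]
    _ = qᵢ * s' * (p * qⱼ) * cⱼ := by rw [hᵢ, hsym]; simp only [mul_assoc]
    _ = qᵢ * s' * qⱼ * (pⱼ * cⱼ) * cⱼ := by rw [← hqⱼ.eq, ← hⱼ]; simp only [mul_assoc]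
    _ = qᵢ * s' * qⱼ * cⱼ * cⱼ * pⱼ := by simp only [mul_assoc, hpⱼ.eq]

end Monoid

theorem LinearMap.mem_ker_of_mul_eq_mul {R M : Type*} [Semiring R] [AddCommMonoid M]
    [Module R M] {f g X T : Module.End R M} (h : f * X = T * g) {u : M}
    (hu : u ∈ LinearMap.ker g) : X u ∈ LinearMap.ker f := by
  rw [LinearMap.mem_ker] at hu ⊢
  rw [← Module.End.mul_apply, h, Module.End.mul_apply, hu, map_zero]

theorem statement17_general {F V : Type*} [Field F] [AddCommGroup V] [Module F V]
    (ℓ : ℕ) (P Q : Fin (ℓ + 1) → Module.End F V)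
    (hP : ∀ i j, Commute (P i) (P j))
    (hQP : ∀ i j, Commute (Q i) (P j))
    (S S' : Module.End F V)
    (hsym : prodOver P hP Finset.univ * S = S' * prodOver P hP Finset.univ) :
    ∀ i j : Fin (ℓ + 1),
      (∃ T : Module.End F V,
        P i * ((Q i * prodOver P hP (Finset.univ.erase i)) * S *
          (Q j * prodOver P hP (Finset.univ.erase j))) = T * P j) ∧
      ∀ u ∈ LinearMap.ker (P j),
        ((Q i * prodOver P hP (Finset.univ.erase i)) * S *
          (Q j * prodOver P hP (Finset.univ.erase j))) u ∈
            LinearMap.ker (P i) := by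
  intro i j
  have hT := mul_sandwich_eq_mul_of_mul_eq_mul (mul_prodOver_erase P hP i)
    (mul_prodOver_erase P hP j) (hQP i i) (Commute.prodOver hP (hQP j) univ)
    (Commute.prodOver hP (hP j) _) hsym
  exact ⟨⟨_, hT⟩, fun _ hu => LinearMap.mem_ker_of_mul_eq_mul hT hu⟩

/-- Let `P = P₀⋯P_ℓ` with decomposition `id_V = Σ_i Q_i P^i`.
If `S` is a formal symmetry of `P` (`P S = S' P` for some `S'`) and
`Pr_i := Q_i P^i`, then for each `i, j` the operator `S_{ij} := Pr_i S Pr_j`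
satisfies `P_i S_{ij} = T_{ij} P_j` for some `T_{ij}`; in particular `S_{ij}`
maps `ker(P_j)` into `ker(P_i)`. -/
theorem statement17 {F V : Type*} [Field F] [AddCommGroup V] [Module F V]
    (ℓ : ℕ) (P Q : Fin (ℓ + 1) → Module.End F V)
    (hP : ∀ i j, Commute (P i) (P j))
    (hQP : ∀ i j, Commute (Q i) (P j))
    (hid : ∑ i : Fin (ℓ + 1), Q i * prodOver P hP (Finset.univ.erase i) = 1)
    (S S' : Module.End F V)
    (hsym : prodOver P hP Finset.univ * S = S' * prodOver P hP Finset.univ) :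
    ∀ i j : Fin (ℓ + 1),
      (∃ T : Module.End F V,
        P i * ((Q i * prodOver P hP (Finset.univ.erase i)) * S *
          (Q j * prodOver P hP (Finset.univ.erase j))) = T * P j) ∧
      ∀ u ∈ LinearMap.ker (P j),
        ((Q i * prodOver P hP (Finset.univ.erase i)) * S *
          (Q j * prodOver P hP (Finset.univ.erase j))) u ∈
            LinearMap.ker (P i) :=
  statement17_general ℓ P Q hP hQP S S' hsym
end
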